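/- Let M ∈ ℝ, c ∈ ℝ with c > 0, assume 4M > 3(c − 1)², and let H be the map H(x,y) = (x̄, ȳ) with x̄ = M + c·x − y², ȳ = (y + x̄² − M)/c. Then at each of the two fixed points of H off the diagonal (i.e. the points (u,v), u ≠ v, with u + v = 1 − c, u·v = (1 − c)² − M), the Jacobian matrix of H has trace strictly greater than 2 and two real eigenvalues λ and λ⁻¹ with λ > 1; i.e. for c > 0 the pitchfork bifurcation at 4M = 3(c − 1)² produces a couple of symmetric saddle fixed points. -/

import Mathlib

/-!
The map `H` is area-preserving: its Jacobian has determinant `1` everywhere, so the eigenvalues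
at any point are the roots of `λ² - Tλ + 1`, where `T` is the trace; they are real, mutually
inverse and different from `±1` as soon as `T > 2`. Adding the two fixed-point equations
`u = M + cu - v²`, `cv = v + u² - M` gives `(u - v)(u + v - (1 - c)) = 0`, which pins down the
sum and product of the coordinates of an off-diagonal fixed point. At such a point the trace is
`c + (1 - 4uv)/c = 2 + (4M - 3(c - 1)²)/c`, which exceeds `2` exactly past the pitchfork.
-/

noncomputable def Hmap (M c : ℝ) (p : ℝ × ℝ) : ℝ × ℝ :=
  (M + c * p.1 - p.2 ^ 2,
    (p.2 + (M + c * p.1 - p.2 ^ 2) ^ 2 - M) / c)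

noncomputable def HJac (M c : ℝ) (p : ℝ × ℝ) : Matrix (Fin 2) (Fin 2) ℝ :=
  !![c, -2 * p.2;
     2 * (M + c * p.1 - p.2 ^ 2), (1 - 4 * (M + c * p.1 - p.2 ^ 2) * p.2) / c]

def hasEigenvalue (A : Matrix (Fin 2) (Fin 2) ℝ) (μ : ℂ) : Prop :=
  (A.map (fun t : ℝ => (t : ℂ)) - μ • 1).det = 0

lemma hasEigenvalue_ofReal_iff (A : Matrix (Fin 2) (Fin 2) ℝ) (μ : ℝ) :
    hasEigenvalue A μ ↔ μ ^ 2 - A.trace * μ + A.det = 0 := by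
  have hpoly : μ ^ 2 - A.trace * μ + A.det = (A 0 0 - μ) * (A 1 1 - μ) - A 0 1 * A 1 0 := by
    rw [Matrix.trace_fin_two, Matrix.det_fin_two]
    ring
  rw [hpoly, hasEigenvalue, Matrix.det_fin_two]
  simp only [Matrix.sub_apply, Matrix.map_apply, Matrix.smul_apply, Matrix.one_apply_eq,
    Matrix.one_apply_ne zero_ne_one, Matrix.one_apply_ne one_ne_zero, smul_eq_mul, mul_one,
    mul_zero, sub_zero]
  exact_mod_cast Iff.rfl

theorem Matrix.exists_eigenvalue_inv_of_det_eq_one_of_two_lt_trace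
    (A : Matrix (Fin 2) (Fin 2) ℝ) (hdet : A.det = 1) (htr : 2 < A.trace) :
    ∃ lam : ℝ, 1 < lam ∧ hasEigenvalue A lam ∧ hasEigenvalue A (lam⁻¹ : ℝ) := by
  set T := A.trace
  have hdisc : 0 ≤ T ^ 2 - 4 := by nlinarith
  set r := √(T ^ 2 - 4)
  have hr : r ^ 2 = T ^ 2 - 4 := Real.sq_sqrt hdisc
  have hlam : 1 < (T + r) / 2 := by linarith [Real.sqrt_nonneg (T ^ 2 - 4)]
  set lam := (T + r) / 2
  have hroot : lam ^ 2 - T * lam + 1 = 0 := by linear_combination hr / 4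
  refine ⟨lam, hlam, ?_, ?_⟩
  · rwa [hasEigenvalue_ofReal_iff, hdet]
  · -- `λ² - Tλ + 1` is palindromic, so its roots are closed under inversion
    rw [hasEigenvalue_ofReal_iff, hdet]
    calc lam⁻¹ ^ 2 - T * lam⁻¹ + 1 = lam⁻¹ ^ 2 * (lam ^ 2 - T * lam + 1) := by
          field_simp
          ring
      _ = 0 := by rw [hroot, mul_zero]

theorem det_HJac (M : ℝ) {c : ℝ} (hc : c ≠ 0) (p : ℝ × ℝ) : (HJac M c p).det = 1 := by
  rw [HJac, Matrix.det_fin_two_of]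
  field_simp
  ring

theorem Hmap_eq_self_iff (M : ℝ) {c : ℝ} (hc : c ≠ 0) (u v : ℝ) :
    Hmap M c (u, v) = (u, v) ↔ M + c * u - v ^ 2 = u ∧ v + u ^ 2 - M = c * v := by
  rw [Hmap, Prod.mk.injEq]
  constructor
  · rintro ⟨h1, h2⟩
    rw [h1, div_eq_iff hc] at h2
    exact ⟨h1, by linarith⟩
  · rintro ⟨h1, h2⟩
    rw [h1, div_eq_iff hc]
    exact ⟨rfl, by linarith⟩

theorem Hmap_fixedPoint_sum_prod (M : ℝ) {c : ℝ} (hc : c ≠ 0) {u v : ℝ} (huv : u ≠ v)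
    (hfix : Hmap M c (u, v) = (u, v)) : u + v = 1 - c ∧ u * v = (1 - c) ^ 2 - M := by
  obtain ⟨h1, h2⟩ := (Hmap_eq_self_iff M hc u v).mp hfix
  have hfactor : (u - v) * (u + v - (1 - c)) = 0 := by linear_combination h1 + h2
  have hsum : u + v = 1 - c :=
    sub_eq_zero.mp ((mul_eq_zero.mp hfactor).resolve_left (sub_ne_zero.mpr huv))
  refine ⟨hsum, ?_⟩
  have hv : v = 1 - c - u := by linarith
  subst hv
  linear_combination h1

theorem exists_Hmap_fixedPoint_ne {M c : ℝ} (hc : c ≠ 0) (hM : 3 * (c - 1) ^ 2 < 4 * M) :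
    ∃ u v : ℝ, u ≠ v ∧ Hmap M c (u, v) = (u, v) := by
  have hD : 0 < 4 * M - 3 * (1 - c) ^ 2 := by linarith [show (1 - c) ^ 2 = (c - 1) ^ 2 by ring]
  set d := √(4 * M - 3 * (1 - c) ^ 2)
  have hd : d ^ 2 = 4 * M - 3 * (1 - c) ^ 2 := Real.sq_sqrt hD.le
  have hdpos : 0 < d := Real.sqrt_pos.mpr hD
  refine ⟨(1 - c + d) / 2, (1 - c - d) / 2, by linarith, ?_⟩
  rw [Hmap_eq_self_iff M hc]
  exact ⟨by linear_combination -hd / 4, by linear_combination hd / 4⟩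

theorem trace_HJac_fixedPoint {M c : ℝ} (hc : 0 < c) {u v : ℝ} (h1 : M + c * u - v ^ 2 = u)
    (hprod : u * v = (1 - c) ^ 2 - M) :
    (HJac M c (u, v)).trace = 2 + (4 * M - 3 * (c - 1) ^ 2) / c := by
  rw [HJac, Matrix.trace_fin_two_of, h1]
  field_simp
  linear_combination -4 * hprod

/-- for `c > 0` and `4M > 3(c−1)²`, the two off-diagonal fixed points of
`H` (the points `(u,v)`, `u ≠ v`, with `u + v = 1 − c`, `u·v = (1−c)² − M`) exist, and at
each of them the Jacobian matrix has trace `> 2` and two real eigenvalues `λ` and `λ⁻¹`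
with `λ > 1`: the pitchfork bifurcation produces a symmetric couple of saddles. -/
theorem stmt_16 (M c : ℝ) (hc : 0 < c) (hM : 4 * M > 3 * (c - 1) ^ 2) :
    (∃ u v : ℝ, u ≠ v ∧ Hmap M c (u, v) = (u, v)) ∧
    ∀ u v : ℝ, u ≠ v → Hmap M c (u, v) = (u, v) →
      (u + v = 1 - c ∧ u * v = (1 - c) ^ 2 - M) ∧
      2 < Matrix.trace (HJac M c (u, v)) ∧
      ∃ lam : ℝ, 1 < lam ∧
        hasEigenvalue (HJac M c (u, v)) (lam : ℂ) ∧
        hasEigenvalue (HJac M c (u, v)) ((lam⁻¹ : ℝ) : ℂ) := by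
  refine ⟨exists_Hmap_fixedPoint_ne hc.ne' hM, fun u v huv hfix => ?_⟩
  obtain ⟨hsum, hprod⟩ := Hmap_fixedPoint_sum_prod M hc.ne' huv hfix
  have htr : 2 < (HJac M c (u, v)).trace := by
    rw [trace_HJac_fixedPoint hc ((Hmap_eq_self_iff M hc.ne' u v).mp hfix).1 hprod]
    have : 0 < 4 * M - 3 * (c - 1) ^ 2 := by linarith
    linarith [div_pos this hc]
  exact ⟨⟨hsum, hprod⟩, htr,
    (HJac M c (u, v)).exists_eigenvalue_inv_of_det_eq_one_of_two_lt_trace (det_HJac M hc.ne' _) htr⟩
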